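/- (Lemma 3.3, surface case k = d−1.) There is a constant c > 0 such that for every closed set B ⊆ ℝ^d and every ε ∈ (0,R), H^{d−1}(∂F_ε ∩ B) ≤ c · #Ω(B,ε) · ε^{d−1}, where Ω(B,ε) := {ω ∈ Σ(ε) : (S_ω F)_ε ∩ B ≠ ∅} and #Ω(B,ε) is its cardinality. -/

import Mathlib

/-!
A point of `∂F_ε ∩ B` is at distance exactly `ε` from `F`, hence within `ε` of a cylinder
`S_ω F` with `ω ∈ Ω(B, ε)`; since `R r_ω < ε`, the `ε`-neighbourhood of that cylinder lies in a
ball of radius `(1 + diam F / R) ε`. It therefore suffices that for every closed `K ⊆ ℝᵈ` the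
level set `{x | dist(x, K) = ε}` has `H^{d-1}`-measure at most `C ε^{d-1}` inside any ball of
radius `ρ ε`, with `C` depending only on `d` and `ρ`.

For this, cover the level set, after rescaling by `ε`, by boundedly many patches of diameter
`≤ ε / 2` on each of which the normal `(x - a) / ε` (with `a ∈ K` nearest to `x`) stays within
`1 / 4` of a fixed unit vector `e`. As every other point `y` of the level set lies outside the open
`ε`-ball around `a`, `⟪y - x, e⟫ ≥ -‖y - x‖ / 2` on a patch, so the orthogonal projection onto
`e^⊥` expands distances on the patch by at most a factor `2`; the patch thus has measure at most
`2^{d-1}` times that of a `(d-1)`-dimensional ball of radius `ε / 4`.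
-/

open MeasureTheory Filter Metric Set

/-- For a word `ω = ω₁…ωₙ`, the product `r_ω = r_{ω₁} ⋯ r_{ωₙ}` of contraction
ratios (`r_∅ = 1`). -/
def wordRatio {N : ℕ} (r : Fin N → ℝ) (ω : List (Fin N)) : ℝ := (ω.map r).prod

/-- For a word `ω = ω₁…ωₙ`, the composed map `S_ω = S_{ω₁} ∘ ⋯ ∘ S_{ωₙ}`
(`S_∅ = id`). -/
def wordMap {N : ℕ} {E : Type*} (S : Fin N → E → E) (ω : List (Fin N)) : E → E :=
  ω.foldr (fun i g => S i ∘ g) id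

/-- The family `Σ(ε)` of all words `ω = ω₁…ωₙ`, `n ≥ 1`, with
`R r_ω < ε ≤ R r_{ω₁…ω_{n-1}}`. -/
def sigmaWords {N : ℕ} (r : Fin N → ℝ) (R ε : ℝ) : Set (List (Fin N)) :=
  {ω | ω ≠ [] ∧ R * wordRatio r ω < ε ∧ ε ≤ R * wordRatio r ω.dropLast}

open Module RealInnerProductSpace
open scoped ENNReal NNReal

section Words

variable {N : ℕ} {E : Type*} {r : Fin N → ℝ} {S : Fin N → E → E}

@[simp]
theorem wordRatio_nil : wordRatio r [] = 1 := rfl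

@[simp]
theorem wordRatio_cons (i : Fin N) (ω : List (Fin N)) :
    wordRatio r (i :: ω) = r i * wordRatio r ω := List.prod_cons

@[simp]
theorem wordMap_nil : wordMap S [] = id := rfl

@[simp]
theorem wordMap_cons (i : Fin N) (ω : List (Fin N)) : wordMap S (i :: ω) = S i ∘ wordMap S ω :=
  rfl

theorem wordRatio_nonneg (hr : ∀ i, 0 ≤ r i) (ω : List (Fin N)) : 0 ≤ wordRatio r ω :=
  List.prod_nonneg fun _ hx => by
    obtain ⟨i, -, rfl⟩ := List.mem_map.mp hx
    exact hr i

theorem wordRatio_le_pow {ρ : ℝ} (hr : ∀ i, 0 ≤ r i) (hρ : ∀ i, r i ≤ ρ) (ω : List (Fin N)) :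
    wordRatio r ω ≤ ρ ^ ω.length := by
  induction ω with
  | nil => simp
  | cons i ω ih =>
    rw [wordRatio_cons, List.length_cons, pow_succ']
    exact mul_le_mul (hρ i) ih (wordRatio_nonneg hr ω) ((hr i).trans (hρ i))

theorem dist_wordMap [MetricSpace E] (hS : ∀ i x y, dist (S i x) (S i y) = r i * dist x y)
    (ω : List (Fin N)) (x y : E) :
    dist (wordMap S ω x) (wordMap S ω y) = wordRatio r ω * dist x y := by
  induction ω with
  | nil => simp
  | cons i ω ih => simp only [wordMap_cons, Function.comp_apply, hS, ih, wordRatio_cons, mul_assoc]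

theorem lipschitzWith_wordMap [MetricSpace E]
    (hS : ∀ i x y, dist (S i x) (S i y) = r i * dist x y) (ω : List (Fin N)) :
    LipschitzWith (wordRatio r ω).toNNReal (wordMap S ω) :=
  .of_dist_le_mul fun x y => by
    rw [dist_wordMap hS]
    gcongr
    exact Real.le_coe_toNNReal _

theorem exists_lt_one_forall_le (hr : ∀ i, r i < 1) : ∃ ρ : ℝ, 0 ≤ ρ ∧ ρ < 1 ∧ ∀ i, r i ≤ ρ := by
  refine ⟨(Finset.univ.sup fun i => (r i).toNNReal : ℝ≥0), NNReal.coe_nonneg _, ?_, fun i => ?_⟩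
  · exact NNReal.coe_lt_one.mpr <| (Finset.sup_lt_iff zero_lt_one).mpr fun i _ =>
      Real.toNNReal_lt_one.mpr (hr i)
  · exact (Real.le_coe_toNNReal _).trans <|
      Finset.le_sup (f := fun i => (r i).toNNReal) (Finset.mem_univ i)

theorem sigmaWords_finite (hr : ∀ i, r i ∈ Ioo (0 : ℝ) 1) {R ε : ℝ} (hR : 0 < R) (hε : 0 < ε) :
    (sigmaWords r R ε).Finite := by
  obtain ⟨ρ, hρ0, hρ1, hρ⟩ := exists_lt_one_forall_le fun i => (hr i).2
  obtain ⟨n, hn⟩ := exists_pow_lt_of_lt_one (div_pos hε hR) hρ1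
  refine (List.finite_length_le (Fin N) n).subset ?_
  rintro ω ⟨-, -, hω⟩
  change ω.length ≤ n
  by_contra! hlen
  have hdrop : n ≤ ω.dropLast.length := by rw [List.length_dropLast]; omega
  rw [lt_div_iff₀' hR] at hn
  have := calc ε ≤ R * wordRatio r ω.dropLast := hω
    _ ≤ R * ρ ^ ω.dropLast.length := by gcongr; exact wordRatio_le_pow (fun i => (hr i).1.le) hρ _
    _ ≤ R * ρ ^ n := mul_le_mul_of_nonneg_left (pow_le_pow_of_le_one hρ0 hρ1.le hdrop) hR.le
  linarith

theorem singleton_mem_sigmaWords {R ε : ℝ} {i : Fin N} (hi : R * r i < ε) (hεR : ε ≤ R) :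
    [i] ∈ sigmaWords r R ε :=
  ⟨List.cons_ne_nil _ _, by simpa using hi, by simpa using hεR⟩

theorem cons_mem_sigmaWords {R ε : ℝ} {i : Fin N} (hi : 0 < r i) {ω : List (Fin N)}
    (hω : ω ∈ sigmaWords r R (ε / r i)) : i :: ω ∈ sigmaWords r R ε := by
  obtain ⟨hne, hlt, hle⟩ := hω
  refine ⟨List.cons_ne_nil _ _, ?_, ?_⟩
  · rw [wordRatio_cons, mul_left_comm]
    exact (lt_div_iff₀' hi).mp hlt
  · rw [List.dropLast_cons_of_ne_nil hne, wordRatio_cons, mul_left_comm]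
    exact (div_le_iff₀' hi).mp hle

theorem exists_mem_sigmaWords_mem_image {F : Set E} (hFinv : F = ⋃ i, S i '' F)
    (hr : ∀ i, r i ∈ Ioo (0 : ℝ) 1) {R ε : ℝ} (hε : 0 < ε) (hεR : ε ≤ R) {x : E} (hx : x ∈ F) :
    ∃ ω ∈ sigmaWords r R ε, x ∈ wordMap S ω '' F := by
  obtain ⟨ρ, hρ0, hρ1, hρ⟩ := exists_lt_one_forall_le fun i => (hr i).2
  have hR : 0 < R := hε.trans_le hεR
  obtain ⟨n, hn⟩ := exists_pow_lt_of_lt_one (div_pos hε hR) hρ1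
  rw [lt_div_iff₀ hR, mul_comm] at hn
  induction n generalizing ε x with
  | zero => simp at hn; linarith
  | succ n ih =>
    rw [hFinv] at hx
    obtain ⟨i, y, hy, rfl⟩ : ∃ i, ∃ y ∈ F, S i y = x := by simpa using hx
    by_cases hi : R * r i < ε
    · exact ⟨[i], singleton_mem_sigmaWords hi hεR, y, hy, rfl⟩
    have hri := (hr i).1
    have hεi : ε / r i ≤ R := (div_le_iff₀ hri).mpr (not_lt.mp hi)
    have hn' : R * ρ ^ n < ε / r i := by
      rw [lt_div_iff₀ hri]
      calc R * ρ ^ n * r i ≤ R * ρ ^ n * ρ := by gcongr; exact hρ i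
        _ < ε := by rwa [mul_assoc, ← pow_succ]
    obtain ⟨ω, hω, z, hz, rfl⟩ := ih (div_pos hε hri) hεi hy hn'
    exact ⟨i :: ω, cons_mem_sigmaWords hri hω, z, hz, rfl⟩

end Words

theorem measure_le_ncard_mul {α ι : Type*} [MeasurableSpace α] (μ : Measure α) {s : Set α}
    {Ω : Set ι} (hΩ : Ω.Finite) {A : ι → Set α} (hs : s ⊆ ⋃ ω ∈ Ω, A ω) {b : ℝ≥0∞}
    (hA : ∀ ω ∈ Ω, μ (A ω) ≤ b) : μ s ≤ Ω.ncard * b := by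
  calc μ s ≤ μ (⋃ ω ∈ hΩ.toFinset, A ω) := measure_mono (by simpa using hs)
    _ ≤ ∑ ω ∈ hΩ.toFinset, μ (A ω) := measure_biUnion_finset_le _ _
    _ ≤ hΩ.toFinset.card • b := Finset.sum_le_card_nsmul _ _ _ fun ω hω => hA ω (by simpa using hω)
    _ = Ω.ncard * b := by rw [nsmul_eq_mul, ncard_eq_toFinset_card Ω hΩ]

theorem IsCompact.cthickening_subset_closedBall {α : Type*} [PseudoMetricSpace α] {A : Set α}
    (hA : IsCompact A) {δ : ℝ} (hδ : 0 ≤ δ) {z : α} (hz : z ∈ A) :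
    cthickening δ A ⊆ closedBall z (δ + diam A) := by
  rw [hA.cthickening_eq_biUnion_closedBall hδ]
  exact iUnion₂_subset fun w hw =>
    closedBall_subset_closedBall' (by gcongr; exact dist_le_diam_of_mem hA.isBounded hw hz)

theorem le_hausdorffMeasure_image_of_dist_le {X Y : Type*} [MetricSpace X] [MeasurableSpace X]
    [BorelSpace X] [MetricSpace Y] [MeasurableSpace Y] [BorelSpace Y] {f : X → Y} {K : ℝ≥0}
    {A : Set X} (hf : ∀ x ∈ A, ∀ y ∈ A, dist x y ≤ K * dist (f x) (f y)) {d : ℝ} (hd : 0 ≤ d) :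
    μH[d] A ≤ (K : ℝ≥0∞) ^ d * μH[d] (f '' A) := by
  have hanti : AntilipschitzWith K (A.domRestrict f) :=
    .of_le_mul_dist fun x y => hf x x.2 y y.2
  calc μH[d] A = μH[d] (univ : Set A) := by
        rw [← (isometry_subtype_coe (s := A)).hausdorffMeasure_image (Or.inl hd), image_univ,
          Subtype.range_coe]
    _ ≤ (K : ℝ≥0∞) ^ d * μH[d] (A.domRestrict f '' univ) := hanti.le_hausdorffMeasure_image hd _
    _ = (K : ℝ≥0∞) ^ d * μH[d] (f '' A) := by rw [image_univ, range_domRestrict]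

noncomputable def unitBallHausdorffMeasure (m : ℕ) : ℝ≥0∞ :=
  μH[m] (closedBall (0 : EuclideanSpace ℝ (Fin m)) 1)

theorem unitBallHausdorffMeasure_ne_top (m : ℕ) : unitBallHausdorffMeasure m ≠ ⊤ := by
  have h := (isCompact_closedBall (0 : EuclideanSpace ℝ (Fin m)) 1).measure_lt_top
    (μ := μH[finrank ℝ (EuclideanSpace ℝ (Fin m))])
  rw [finrank_euclideanSpace_fin] at h
  exact h.ne

section InnerProductSpace

variable {H : Type*} [NormedAddCommGroup H] [InnerProductSpace ℝ H]

theorem hausdorffMeasure_closedBall [FiniteDimensional ℝ H] [MeasurableSpace H] [BorelSpace H]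
    (c : H) {s : ℝ} (hs : 0 ≤ s) :
    μH[finrank ℝ H] (closedBall c s) =
      ENNReal.ofReal (s ^ finrank ℝ H) * unitBallHausdorffMeasure (finrank ℝ H) := by
  let φ := (stdOrthonormalBasis ℝ H).repr
  rw [Measure.addHaar_closedBall' _ c hs, unitBallHausdorffMeasure,
    ← φ.isometry.hausdorffMeasure_image (Or.inl (Nat.cast_nonneg _)), φ.image_closedBall,
    map_zero]

theorem norm_sq_eq_inner_sq_add_norm_sq_orthogonalProjectionOnto {e : H} (he : ‖e‖ = 1) (v : H) :
    ‖v‖ ^ 2 = ⟪e, v⟫ ^ 2 + ‖(ℝ ∙ e)ᗮ.orthogonalProjectionOnto v‖ ^ 2 := by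
  rw [(ℝ ∙ e).norm_sq_eq_add_norm_sq_projection v]
  congr 1
  rw [Submodule.coe_norm, ← Submodule.starProjection_apply,
    Submodule.starProjection_unit_singleton ℝ he, norm_smul, he, mul_one, Real.norm_eq_abs, sq_abs]

theorem hausdorffMeasure_le_of_abs_inner_le [FiniteDimensional ℝ H] [MeasurableSpace H]
    [BorelSpace H] {m : ℕ} (hm : finrank ℝ H = m + 1) {e : H} (he : ‖e‖ = 1) {A : Set H}
    (hA : ∀ x ∈ A, ∀ y ∈ A, |⟪x - y, e⟫| ≤ ‖x - y‖ / 2) {c : H} {s : ℝ} (hs : 0 ≤ s)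
    (hAs : A ⊆ closedBall c s) :
    μH[m] A ≤ 2 ^ m * unitBallHausdorffMeasure m * ENNReal.ofReal (s ^ m) := by
  have : Fact (finrank ℝ H = m + 1) := ⟨hm⟩
  have he0 : e ≠ 0 := by rintro rfl; simp at he
  set P := (ℝ ∙ e)ᗮ.orthogonalProjectionOnto
  have hW : finrank ℝ (ℝ ∙ e)ᗮ = m := Submodule.finrank_orthogonal_span_singleton he0
  have hP : ∀ x ∈ A, ∀ y ∈ A, dist x y ≤ (2 : ℝ≥0) * dist (P x) (P y) := by
    intro x hx y hy
    have hpyth := norm_sq_eq_inner_sq_add_norm_sq_orthogonalProjectionOnto he (x - y)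
    have hflat := hA x hx y hy
    rw [real_inner_comm] at hpyth
    rw [dist_eq_norm, dist_eq_norm, ← map_sub, NNReal.coe_ofNat]
    nlinarith [sq_abs ⟪x - y, e⟫, abs_nonneg ⟪x - y, e⟫, norm_nonneg (x - y),
      norm_nonneg (P (x - y))]
  have hPA : P '' A ⊆ closedBall (P c) s := by
    rintro _ ⟨x, hx, rfl⟩
    rw [mem_closedBall, dist_eq_norm, ← map_sub]
    exact (Submodule.norm_orthogonalProjectionOnto_apply_le _ _).trans
      (mem_closedBall_iff_norm.mp (hAs hx))
  calc μH[m] A ≤ (2 : ℝ≥0∞) ^ (m : ℝ) * μH[m] (P '' A) := by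
        exact_mod_cast le_hausdorffMeasure_image_of_dist_le hP (Nat.cast_nonneg m)
    _ ≤ 2 ^ m * μH[finrank ℝ (ℝ ∙ e)ᗮ] (closedBall (P c) s) := by
        rw [hW, ENNReal.rpow_natCast]
        gcongr
    _ = 2 ^ m * unitBallHausdorffMeasure m * ENNReal.ofReal (s ^ m) := by
        rw [hausdorffMeasure_closedBall _ hs, hW]
        ring

end InnerProductSpace

section LevelSet

variable {H : Type*} [NormedAddCommGroup H] [InnerProductSpace ℝ H]

theorem neg_half_norm_le_inner {ε : ℝ} (hε : 0 < ε) {x y a e : H} (hxy : ‖x - a‖ ≤ ‖y - a‖)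
    (hyx : ‖y - x‖ ≤ ε / 2) (he : ‖x - a - ε • e‖ ≤ ε / 4) :
    -(‖y - x‖ / 2) ≤ ⟪y - x, e⟫ := by
  have hexpand : ‖y - a‖ ^ 2 = ‖y - x‖ ^ 2 + 2 * ⟪y - x, x - a⟫ + ‖x - a‖ ^ 2 := by
    rw [← norm_add_sq_real, sub_add_sub_cancel]
  have hsq : ‖x - a‖ ^ 2 ≤ ‖y - a‖ ^ 2 := by gcongr
  have hdev : |⟪y - x, x - a - ε • e⟫| ≤ ‖y - x‖ * (ε / 4) :=
    (abs_real_inner_le_norm _ _).trans (by gcongr)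
  have hsplit : ε * ⟪y - x, e⟫ = ⟪y - x, x - a⟫ - ⟪y - x, x - a - ε • e⟫ := by
    rw [inner_sub_right (y - x) (x - a), real_inner_smul_right]; ring
  have : ε * -(‖y - x‖ / 2) ≤ ε * ⟪y - x, e⟫ := by
    nlinarith [(abs_le.mp hdev).2, norm_nonneg (y - x)]
  exact le_of_mul_le_mul_left this hε

def levelSetPatch (K : Set H) (ε : ℝ) (c e : H) : Set H :=
  {x | infDist x K = ε ∧ ‖x - c‖ ≤ ε / 4 ∧ ∃ a ∈ K, ‖x - a‖ = ε ∧ ‖x - a - ε • e‖ ≤ ε / 4}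

theorem abs_inner_le_of_mem_levelSetPatch {K : Set H} {ε : ℝ} (hε : 0 < ε) {c e x y : H}
    (hx : x ∈ levelSetPatch K ε c e) (hy : y ∈ levelSetPatch K ε c e) :
    |⟪x - y, e⟫| ≤ ‖x - y‖ / 2 := by
  have hside : ∀ x ∈ levelSetPatch K ε c e, ∀ y ∈ levelSetPatch K ε c e,
      -(‖y - x‖ / 2) ≤ ⟪y - x, e⟫ := by
    rintro x ⟨-, hxc, a, ha, hxa, hnormal⟩ y ⟨hy, hyc, -⟩
    refine neg_half_norm_le_inner hε ?_ ?_ hnormal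
    · rw [hxa, ← dist_eq_norm, ← hy]
      exact infDist_le_dist_of_mem ha
    · calc ‖y - x‖ ≤ ‖y - c‖ + ‖x - c‖ := by
            simpa only [norm_sub_rev c x] using norm_sub_le_norm_sub_add_norm_sub y c x
        _ ≤ ε / 2 := by linarith
  have hyx := hside x hx y hy
  rw [← neg_sub x y, inner_neg_left, norm_neg] at hyx
  exact abs_le.mpr ⟨hside y hy x hx, by linarith⟩

theorem hausdorffMeasure_levelSetPatch_le [FiniteDimensional ℝ H] [MeasurableSpace H]
    [BorelSpace H] {m : ℕ} (hm : finrank ℝ H = m + 1) {e : H} (he : ‖e‖ = 1) (K : Set H)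
    {ε : ℝ} (hε : 0 < ε) (c : H) :
    μH[m] (levelSetPatch K ε c e) ≤
      2 ^ m * unitBallHausdorffMeasure m * ENNReal.ofReal ((ε / 4) ^ m) :=
  hausdorffMeasure_le_of_abs_inner_le hm he
    (fun _ hx _ hy => abs_inner_le_of_mem_levelSetPatch hε hx hy) (by positivity)
    (fun _ hx => mem_closedBall_iff_norm.mpr hx.2.1)

theorem norm_sub_smul_eq_mul_norm {ε : ℝ} (hε : 0 < ε) (v w : H) :
    ‖v - ε • w‖ = ε * ‖ε⁻¹ • v - w‖ := by
  have : v - ε • w = ε • (ε⁻¹ • v - w) := by rw [smul_sub, smul_inv_smul₀ hε.ne']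
  rw [this, norm_smul, Real.norm_of_nonneg hε.le]

theorem levelSet_inter_closedBall_subset_iUnion_levelSetPatch [ProperSpace H] {K : Set H}
    (hK : IsClosed K) {ε : ℝ} (hε : 0 < ε) {ρ : ℝ} (z : H) {T P : Finset H}
    (hT : sphere (0 : H) 1 ⊆ ⋃ e ∈ T, ball e (1 / 4))
    (hP : closedBall (0 : H) ρ ⊆ ⋃ p ∈ P, ball p (1 / 4)) :
    {x | infDist x K = ε} ∩ closedBall z (ρ * ε) ⊆
      ⋃ q ∈ T ×ˢ P, levelSetPatch K ε (z + ε • q.2) q.1 := by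
  rintro x ⟨hx, hxz⟩
  have hK0 : K.Nonempty := nonempty_iff_ne_empty.mpr fun h => by
    simp [h, hε.ne] at hx
  obtain ⟨a, ha, hxa⟩ := hK.exists_infDist_eq_dist hK0 x
  have hxa' : ‖x - a‖ = ε := by rw [← dist_eq_norm, ← hxa, hx]
  have hnormal : ε⁻¹ • (x - a) ∈ sphere (0 : H) 1 := by
    rw [mem_sphere_zero_iff_norm, norm_smul, hxa', Real.norm_of_nonneg (inv_nonneg.mpr hε.le),
      inv_mul_cancel₀ hε.ne']
  have hcenter : ε⁻¹ • (x - z) ∈ closedBall (0 : H) ρ := by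
    rw [mem_closedBall_zero_iff, norm_smul, Real.norm_of_nonneg (inv_nonneg.mpr hε.le),
      inv_mul_le_iff₀ hε, mul_comm]
    exact mem_closedBall_iff_norm.mp hxz
  obtain ⟨e, heT, he⟩ := mem_iUnion₂.mp (hT hnormal)
  obtain ⟨p, hpP, hp⟩ := mem_iUnion₂.mp (hP hcenter)
  rw [mem_ball_iff_norm] at he hp
  refine mem_iUnion₂.mpr ⟨(e, p), Finset.mem_product.mpr ⟨heT, hpP⟩, hx, ?_, a, ha, hxa', ?_⟩
  · rw [sub_add_eq_sub_sub, norm_sub_smul_eq_mul_norm hε]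
    nlinarith
  · rw [norm_sub_smul_eq_mul_norm hε]
    nlinarith

end LevelSet

section LevelSetEstimate

variable {H : Type*} [NormedAddCommGroup H] [InnerProductSpace ℝ H] [FiniteDimensional ℝ H]
  [MeasurableSpace H] [BorelSpace H]

theorem exists_hausdorffMeasure_levelSet_inter_closedBall_le {m : ℕ} (hm : finrank ℝ H = m + 1)
    (ρ : ℝ) :
    ∃ C : ℝ≥0, ∀ K : Set H, IsClosed K → ∀ ε : ℝ, 0 < ε → ∀ z : H,
      μH[m] ({x | infDist x K = ε} ∩ closedBall z (ρ * ε)) ≤ C * ENNReal.ofReal (ε ^ m) := by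
  obtain ⟨T, hTsphere, hT⟩ := (isCompact_sphere (0 : H) 1).elim_nhds_subcover
    (fun e => ball e (1 / 4)) fun e _ => ball_mem_nhds e (by norm_num)
  obtain ⟨P, -, hP⟩ := (isCompact_closedBall (0 : H) ρ).elim_nhds_subcover
    (fun p => ball p (1 / 4)) fun p _ => ball_mem_nhds p (by norm_num)
  set C : ℝ≥0∞ :=
    (T ×ˢ P).card * (2 ^ m * unitBallHausdorffMeasure m * ENNReal.ofReal ((1 / 4) ^ m))
  have hC : C ≠ ⊤ := by
    have := unitBallHausdorffMeasure_ne_top m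
    simp [C, ENNReal.mul_eq_top, this]
  refine ⟨C.toNNReal, fun K hK ε hε z => ?_⟩
  rw [ENNReal.coe_toNNReal hC]
  calc μH[m] ({x | infDist x K = ε} ∩ closedBall z (ρ * ε))
      ≤ μH[m] (⋃ q ∈ T ×ˢ P, levelSetPatch K ε (z + ε • q.2) q.1) :=
        measure_mono (levelSet_inter_closedBall_subset_iUnion_levelSetPatch hK hε z hT hP)
    _ ≤ ∑ q ∈ T ×ˢ P, μH[m] (levelSetPatch K ε (z + ε • q.2) q.1) :=
        measure_biUnion_finset_le _ _
    _ ≤ (T ×ˢ P).card • (2 ^ m * unitBallHausdorffMeasure m * ENNReal.ofReal ((ε / 4) ^ m)) :=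
        Finset.sum_le_card_nsmul _ _ _ fun q hq => hausdorffMeasure_levelSetPatch_le hm
          (mem_sphere_zero_iff_norm.mp (hTsphere q.1 (Finset.mem_product.mp hq).1)) K hε _
    _ = C * ENNReal.ofReal (ε ^ m) := by
        rw [nsmul_eq_mul, div_eq_mul_one_div ε, mul_comm ε, mul_pow,
          ENNReal.ofReal_mul (by positivity)]
        ring

end LevelSetEstimate

section SelfSimilar

variable {N : ℕ} {E : Type*} [MetricSpace E] {r : Fin N → ℝ} {S : Fin N → E → E} {F : Set E}

theorem cthickening_image_wordMap_subset_closedBall (hr : ∀ i, 0 ≤ r i)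
    (hS : ∀ i x y, dist (S i x) (S i y) = r i * dist x y) (hF : IsCompact F) {R ε : ℝ}
    (hR : 0 < R) (hε : 0 ≤ ε) {ω : List (Fin N)} (hω : R * wordRatio r ω < ε) {z : E}
    (hz : z ∈ wordMap S ω '' F) :
    cthickening ε (wordMap S ω '' F) ⊆ closedBall z ((1 + diam F / R) * ε) := by
  have hlip := lipschitzWith_wordMap hS ω
  have hdiam : diam (wordMap S ω '' F) ≤ wordRatio r ω * diam F := by
    simpa [Real.coe_toNNReal _ (wordRatio_nonneg hr ω)] using hlip.diam_image_le F hF.isBounded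
  refine ((hF.image hlip.continuous).cthickening_subset_closedBall hε hz).trans
    (closedBall_subset_closedBall ?_)
  calc ε + diam (wordMap S ω '' F) ≤ ε + ε / R * diam F := by
        gcongr
        exact hdiam.trans (by gcongr; exact (le_div_iff₀' hR).mpr hω.le)
    _ = (1 + diam F / R) * ε := by ring

theorem infDist_eq_of_mem_frontier_cthickening {ε : ℝ} (hε : 0 ≤ ε) {x : E}
    (hx : x ∈ frontier (cthickening ε F)) : infDist x F = ε := by
  rw [infDist, frontier_cthickening_subset F hx, ENNReal.toReal_ofReal hε]

theorem frontier_cthickening_inter_subset_iUnion (hF : IsCompact F) (hFinv : F = ⋃ i, S i '' F)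
    (hr : ∀ i, r i ∈ Ioo (0 : ℝ) 1) {R ε : ℝ} (hε : 0 < ε) (hεR : ε ≤ R) (B : Set E) :
    frontier (cthickening ε F) ∩ B ⊆
      ⋃ ω ∈ {ω ∈ sigmaWords r R ε | (cthickening ε (wordMap S ω '' F) ∩ B).Nonempty},
        {x | infDist x F = ε} ∩ cthickening ε (wordMap S ω '' F) := by
  rintro x ⟨hx, hxB⟩
  have hxF := infDist_eq_of_mem_frontier_cthickening hε.le hx
  have hF0 : F.Nonempty := nonempty_iff_ne_empty.mpr fun h => by simp [h, hε.ne] at hxF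
  obtain ⟨y, hy, hxy⟩ := hF.exists_infDist_eq_dist hF0 x
  obtain ⟨ω, hω, hyω⟩ := exists_mem_sigmaWords_mem_image hFinv hr hε hεR hy
  have hxω : x ∈ cthickening ε (wordMap S ω '' F) :=
    mem_cthickening_of_dist_le x y ε _ hyω (hxy ▸ hxF).le
  exact mem_biUnion ⟨hω, x, hxω, hxB⟩ ⟨hxF, hxω⟩

end SelfSimilar

theorem surface_localized_estimate_general
    (d N : ℕ) (hd : 1 ≤ d)
    (S : Fin N → EuclideanSpace ℝ (Fin d) → EuclideanSpace ℝ (Fin d))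
    (r : Fin N → ℝ) (hr : ∀ i, r i ∈ Set.Ioo (0 : ℝ) 1)
    (hS : ∀ i x y, dist (S i x) (S i y) = r i * dist x y)
    (F : Set (EuclideanSpace ℝ (Fin d))) (hFc : IsCompact F)
    (hFinv : F = ⋃ i, S i '' F)
    (R : ℝ) :
    ∃ c > (0 : ℝ), ∀ B : Set (EuclideanSpace ℝ (Fin d)), IsClosed B →
      ∀ ε ∈ Set.Ioo (0 : ℝ) R,
        μH[((d : ℝ) - 1)] (frontier (Metric.cthickening ε F) ∩ B) ≤
          ENNReal.ofReal (c *
            ({ω ∈ sigmaWords r R ε |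
                (Metric.cthickening ε (wordMap S ω '' F) ∩ B).Nonempty}.ncard : ℝ) *
            ε ^ ((d : ℝ) - 1)) := by
  obtain ⟨m, rfl⟩ : ∃ m, d = m + 1 := ⟨d - 1, by omega⟩
  obtain ⟨C, hC⟩ := exists_hausdorffMeasure_levelSet_inter_closedBall_le
    (H := EuclideanSpace ℝ (Fin (m + 1))) finrank_euclideanSpace_fin (1 + diam F / R)
  refine ⟨C + 1, by positivity, fun B _ ε ⟨hε, hεR⟩ => ?_⟩
  rw [show ((m + 1 : ℕ) : ℝ) - 1 = m by push_cast; ring, Real.rpow_natCast]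
  set Ω := {ω ∈ sigmaWords r R ε | (cthickening ε (wordMap S ω '' F) ∩ B).Nonempty}
  have hΩ : Ω.Finite := (sigmaWords_finite hr (hε.trans hεR) hε).subset (sep_subset _ _)
  have hpiece : ∀ ω ∈ Ω, μH[m] ({x | infDist x F = ε} ∩ cthickening ε (wordMap S ω '' F)) ≤
      C * ENNReal.ofReal (ε ^ m) := by
    rintro ω ⟨hωsigma, hωB⟩
    obtain ⟨z, hz⟩ : (wordMap S ω '' F).Nonempty :=
      nonempty_iff_ne_empty.mpr fun h => by simp [h] at hωB
    refine (measure_mono (inter_subset_inter_right _ ?_)).trans (hC F hFc.isClosed ε hε z)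
    exact cthickening_image_wordMap_subset_closedBall (fun i => (hr i).1.le) hS hFc
      (hε.trans hεR) hε.le hωsigma.2.1 hz
  refine (measure_le_ncard_mul _ hΩ
    (frontier_cthickening_inter_subset_iUnion hFc hFinv hr hε hεR.le B) hpiece).trans ?_
  rw [← ENNReal.ofReal_natCast, ← ENNReal.ofReal_coe_nnreal, ← ENNReal.ofReal_mul C.coe_nonneg,
    ← ENNReal.ofReal_mul (Nat.cast_nonneg _)]
  apply ENNReal.ofReal_le_ofReal
  nlinarith [pow_pos hε m, (Nat.cast_nonneg Ω.ncard : (0 : ℝ) ≤ _)]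

/-- Lemma 3.3 of Winter–Zähle, surface case `k = d-1`: for any closed `B`, the
surface area of `F_ε` inside `B` is bounded by `c ε^{d-1}` times the number of
words `ω ∈ Σ(ε)` whose cylinder neighborhood `(S_ω F)_ε` meets `B`. -/
theorem surface_localized_estimate
    (d N : ℕ) (hd : 1 ≤ d) (hN : 2 ≤ N)
    (S : Fin N → EuclideanSpace ℝ (Fin d) → EuclideanSpace ℝ (Fin d))
    (r : Fin N → ℝ) (hr : ∀ i, r i ∈ Set.Ioo (0 : ℝ) 1)
    (hS : ∀ i x y, dist (S i x) (S i y) = r i * dist x y)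
    (F : Set (EuclideanSpace ℝ (Fin d))) (hFne : F.Nonempty) (hFc : IsCompact F)
    (hFinv : F = ⋃ i, S i '' F)
    (hOSC : ∃ O : Set (EuclideanSpace ℝ (Fin d)), O.Nonempty ∧ IsOpen O ∧
      Bornology.IsBounded O ∧ (⋃ i, S i '' O) ⊆ O ∧
      ∀ i j, i ≠ j → Disjoint (S i '' O) (S j '' O))
    (D : ℝ) (hD : 0 < D) (hDd : D ≤ d) (hDsum : ∑ i, r i ^ D = 1)
    (R : ℝ) (hR : Real.sqrt 2 * Metric.diam F < R) :
    ∃ c > (0 : ℝ), ∀ B : Set (EuclideanSpace ℝ (Fin d)), IsClosed B →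
      ∀ ε ∈ Set.Ioo (0 : ℝ) R,
        μH[((d : ℝ) - 1)] (frontier (Metric.cthickening ε F) ∩ B) ≤
          ENNReal.ofReal (c *
            ({ω ∈ sigmaWords r R ε |
                (Metric.cthickening ε (wordMap S ω '' F) ∩ B).Nonempty}.ncard : ℝ) *
            ε ^ ((d : ℝ) - 1)) :=
  surface_localized_estimate_general d N hd S r hr hS F hFc hFinv R
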